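/- There exist a constant C > 0 and ε₀ ∈ (0,1) such that for every ε ∈ (0, ε₀) and all t₁, t₂ ∈ ℝ, the spiral map satisfies ‖g_ε(t₁) − g_ε(t₂)‖ ≥ (1 − C/ln²(1/ε))·|t₁ − t₂| (i.e., g_ε contracts no pair of points by more than a factor 1 + O(1/ln²(1/ε))). -/

import Mathlib

/-- The point `(a, b) ∈ ℝ²` (Euclidean plane). -/
noncomputable def pt (a b : ℝ) : EuclideanSpace ℝ (Fin 2) :=
  (WithLp.equiv 2 (Fin 2 → ℝ)).symm ![a, b]

/-- The angle `φ_ε(t) = π ln(1/|t|) / ln(1/ε)`. -/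
noncomputable def spiralPhi (ε t : ℝ) : ℝ :=
  Real.pi * Real.log (1 / |t|) / Real.log (1 / ε)

/-- The spiral map `g_ε : ℝ → ℝ²`. -/
noncomputable def spiral (ε t : ℝ) : EuclideanSpace ℝ (Fin 2) :=
  if 1 ≤ |t| then pt t 0
  else if |t| ≤ ε then pt (-t) 0
  else pt (t * Real.cos (spiralPhi ε t)) (t * Real.sin (spiralPhi ε t))

/-!
For `t > 0` the spiral is `t e^{iθ(t)}`, where `θ` is `spiralPhi` clamped to `[0, π]`; hence `θ` is
`(π / ln(1/ε))`-Lipschitz as a function of `ln t`. Moreover `g_ε` is odd and `‖g_ε t‖ = |t|`, so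
points of the same sign are not contracted at all, by the reverse triangle inequality. For
`0 < u ≤ s` we have `‖g_ε s + g_ε u‖² = (s + u)² - 2su(1 - cos Δθ) ≥ (s + u)² - su Δθ²`, and
`su Δθ² ≤ (π / ln(1/ε))² s · u ln²(s/u) ≤ 2 (π / ln(1/ε))² s²` because `x² / 2 ≤ eˣ`.
-/

open Real

lemma pt_add_pt (a b c d : ℝ) : pt a b + pt c d = pt (a + c) (b + d) := by
  ext i
  fin_cases i <;> simp [pt]

lemma neg_pt (a b : ℝ) : -pt a b = pt (-a) (-b) := by
  ext i
  fin_cases i <;> simp [pt]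

lemma norm_pt (a b : ℝ) : ‖pt a b‖ = √(a ^ 2 + b ^ 2) := by
  simp [EuclideanSpace.norm_eq, pt, Fin.sum_univ_two]

lemma norm_spiral (ε t : ℝ) : ‖spiral ε t‖ = |t| := by
  unfold spiral
  split_ifs <;>
    simp only [norm_pt, mul_pow, ← mul_add, cos_sq_add_sin_sq, mul_one, neg_sq,
      zero_pow two_ne_zero, add_zero, sqrt_sq_eq_abs]

lemma spiral_neg (ε t : ℝ) : spiral ε (-t) = -spiral ε t := by
  have hphi : spiralPhi ε (-t) = spiralPhi ε t := by simp [spiralPhi]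
  unfold spiral
  simp only [abs_neg, hphi]
  split_ifs <;> simp [neg_pt]

lemma abs_sub_le_norm_spiral_sub {ε t₁ t₂ : ℝ} (h : 0 ≤ t₁ * t₂) :
    |t₁ - t₂| ≤ ‖spiral ε t₁ - spiral ε t₂‖ := by
  have hsq : (t₁ - t₂) ^ 2 = (|t₁| - |t₂|) ^ 2 := by
    rw [sub_sq, sub_sq, sq_abs, sq_abs, mul_assoc, mul_assoc, ← abs_mul, abs_of_nonneg h]
  rw [(sq_eq_sq_iff_abs_eq_abs _ _).1 hsq, ← norm_spiral ε t₁, ← norm_spiral ε t₂]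
  exact abs_norm_sub_norm_le _ _

noncomputable def polarPt (r θ : ℝ) : EuclideanSpace ℝ (Fin 2) :=
  pt (r * cos θ) (r * sin θ)

lemma norm_polarPt_add_sq (r ρ a b : ℝ) :
    ‖polarPt r a + polarPt ρ b‖ ^ 2 = r ^ 2 + ρ ^ 2 + 2 * r * ρ * cos (a - b) := by
  rw [polarPt, polarPt, pt_add_pt, norm_pt, sq_sqrt (by positivity), cos_sub]
  linear_combination r ^ 2 * sin_sq_add_cos_sq a + ρ ^ 2 * sin_sq_add_cos_sq b

lemma add_sq_sub_le_norm_polarPt_add_sq {r ρ : ℝ} (hr : 0 ≤ r) (hρ : 0 ≤ ρ) (a b : ℝ) :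
    (r + ρ) ^ 2 - r * ρ * (a - b) ^ 2 ≤ ‖polarPt r a + polarPt ρ b‖ ^ 2 := by
  rw [norm_polarPt_add_sq]
  nlinarith [one_sub_sq_div_two_le_cos (x := a - b), mul_nonneg hr hρ]

noncomputable def spiralAngle (ε t : ℝ) : ℝ :=
  Set.projIcc 0 π pi_pos.le (spiralPhi ε t)

lemma spiralPhi_of_pos (ε : ℝ) {t : ℝ} (ht : 0 < t) : spiralPhi ε t = π * (log t / log ε) := by
  rw [spiralPhi, abs_of_pos ht, one_div, one_div, log_inv, log_inv, mul_div_assoc, neg_div_neg_eq]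

lemma spiral_eq_polarPt {ε t : ℝ} (hε : 0 < ε) (hε1 : ε < 1) (ht : 0 < t) :
    spiral ε t = polarPt t (spiralAngle ε t) := by
  have hlogε : log ε < 0 := log_neg hε hε1
  have hφ := spiralPhi_of_pos ε ht
  unfold spiral spiralAngle polarPt
  rw [abs_of_pos ht]
  split_ifs with h1 h2
  · have : spiralPhi ε t ≤ 0 := hφ ▸ mul_nonpos_of_nonneg_of_nonpos pi_pos.le
      (div_nonpos_of_nonneg_of_nonpos (log_nonneg h1) hlogε.le)
    simp [Set.projIcc_of_le_left _ this]
  · have : π ≤ spiralPhi ε t := hφ ▸ le_mul_of_one_le_right pi_pos.le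
      ((one_le_div_of_neg hlogε).2 (log_le_log ht h2))
    simp [Set.projIcc_of_right_le _ this]
  · have : spiralPhi ε t ∈ Set.Icc 0 π := hφ ▸
      ⟨mul_nonneg pi_pos.le (div_nonneg_of_nonpos (log_nonpos ht.le (not_le.1 h1).le) hlogε.le),
        mul_le_of_le_one_right pi_pos.le
          ((div_le_one_of_neg hlogε).2 (log_le_log hε (not_le.1 h2).le))⟩
    rw [Set.projIcc_of_mem _ this]

lemma abs_spiralPhi_sub (ε s u : ℝ) :
    |spiralPhi ε s - spiralPhi ε u| = π / |log (1 / ε)| * |log s - log u| := by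
  rw [spiralPhi, spiralPhi, div_sub_div_same, ← mul_sub, abs_div, abs_mul, abs_of_pos pi_pos,
    one_div |s|, one_div |u|, log_inv, log_inv, log_abs, log_abs, neg_sub_neg, abs_sub_comm,
    mul_div_right_comm]

lemma abs_spiralAngle_sub_le (ε s u : ℝ) :
    |spiralAngle ε s - spiralAngle ε u| ≤ |spiralPhi ε s - spiralPhi ε u| :=
  Set.abs_projIcc_sub_projIcc _

lemma mul_sq_log_sub_log_le {s u : ℝ} (hu : 0 < u) (hus : u ≤ s) :
    u * (log s - log u) ^ 2 ≤ 2 * s := by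
  have hx : 0 ≤ log s - log u := sub_nonneg.2 (log_le_log hu hus)
  have hexp : exp (log s - log u) = s / u := by
    rw [exp_sub, exp_log (hu.trans_le hus), exp_log hu]
  have := quadratic_le_exp_of_nonneg hx
  rw [hexp, le_div_iff₀ hu] at this
  nlinarith

lemma add_sq_sub_le_norm_spiral_add_sq {ε s u : ℝ} (hε : 0 < ε) (hε1 : ε < 1) (hu : 0 < u)
    (hus : u ≤ s) :
    (s + u) ^ 2 - 2 * π ^ 2 / log (1 / ε) ^ 2 * s ^ 2 ≤ ‖spiral ε s + spiral ε u‖ ^ 2 := by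
  have hL : 0 < log (1 / ε) := log_pos (by rw [lt_div_iff₀ hε]; linarith)
  have hs : 0 < s := hu.trans_le hus
  set A := spiralAngle ε s
  set B := spiralAngle ε u
  have hAB : |A - B| ≤ π / log (1 / ε) * |log s - log u| := by
    simpa only [abs_spiralPhi_sub, abs_of_pos hL] using abs_spiralAngle_sub_le ε s u
  have hAB_sq : (A - B) ^ 2 ≤ π ^ 2 / log (1 / ε) ^ 2 * (log s - log u) ^ 2 := by
    simpa only [sq_abs, mul_pow, div_pow] using pow_le_pow_left₀ (abs_nonneg _) hAB 2
  have hlog := mul_sq_log_sub_log_le hu hus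
  calc (s + u) ^ 2 - 2 * π ^ 2 / log (1 / ε) ^ 2 * s ^ 2
      ≤ (s + u) ^ 2 - s * u * (A - B) ^ 2 := by
        have hP : 0 ≤ π ^ 2 / log (1 / ε) ^ 2 := by positivity
        rw [mul_div_assoc]
        nlinarith [mul_le_mul_of_nonneg_left hAB_sq (mul_pos hs hu).le,
          mul_le_mul_of_nonneg_left hlog (mul_nonneg hP hs.le)]
    _ ≤ ‖spiral ε s + spiral ε u‖ ^ 2 := by
        rw [spiral_eq_polarPt hε hε1 hs, spiral_eq_polarPt hε hε1 hu]
        exact add_sq_sub_le_norm_polarPt_add_sq hs.le hu.le A B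

lemma mul_add_le_norm_spiral_add {ε s u : ℝ} (hε : 0 < ε) (hε1 : ε < 1) (hs : 0 < s)
    (hu : 0 < u) :
    (1 - 2 * π ^ 2 / log (1 / ε) ^ 2) * (s + u) ≤ ‖spiral ε s + spiral ε u‖ := by
  wlog hus : u ≤ s generalizing s u
  · rw [add_comm s, add_comm (spiral ε s)]
    exact this hu hs (le_of_not_ge hus)
  set δ := 2 * π ^ 2 / log (1 / ε) ^ 2
  have hδ : 0 ≤ δ := by positivity
  rcases le_or_gt (1 - δ) 0 with hc | hc
  · exact (mul_nonpos_of_nonpos_of_nonneg hc (by positivity)).trans (norm_nonneg _)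
  rw [← pow_le_pow_iff_left₀ (by positivity) (norm_nonneg _) two_ne_zero]
  calc ((1 - δ) * (s + u)) ^ 2 = (1 - δ) * (1 - δ) * (s + u) ^ 2 := by ring
    _ ≤ 1 * (1 - δ) * (s + u) ^ 2 := by gcongr; linarith
    _ = (s + u) ^ 2 - δ * (s + u) ^ 2 := by ring
    _ ≤ (s + u) ^ 2 - δ * s ^ 2 := by gcongr; linarith
    _ ≤ ‖spiral ε s + spiral ε u‖ ^ 2 := add_sq_sub_le_norm_spiral_add_sq hε hε1 hu hus

/-- **The spiral map does not contract distances much.** There are `C > 0` and `ε₀ ∈ (0,1)`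
such that for every `ε ∈ (0, ε₀)` and all `t₁, t₂ ∈ ℝ`,
`‖g_ε t₁ - g_ε t₂‖ ≥ (1 - C/ln²(1/ε)) |t₁ - t₂|`. -/
theorem spiral_contraction_bound :
    ∃ C > (0 : ℝ), ∃ ε₀ : ℝ, 0 < ε₀ ∧ ε₀ < 1 ∧ ∀ ε : ℝ, 0 < ε → ε < ε₀ →
      ∀ t₁ t₂ : ℝ,
        (1 - C / (Real.log (1 / ε)) ^ 2) * |t₁ - t₂| ≤ ‖spiral ε t₁ - spiral ε t₂‖ := by
  refine ⟨2 * π ^ 2, by positivity, 1 / 2, by norm_num, by norm_num, fun ε hε hε₀ t₁ t₂ => ?_⟩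
  have hε1 : ε < 1 := hε₀.trans (by norm_num)
  rcases le_or_gt 0 (t₁ * t₂) with h | h
  · have hC : 0 ≤ 2 * π ^ 2 / log (1 / ε) ^ 2 := by positivity
    calc _ ≤ |t₁ - t₂| := mul_le_of_le_one_left (abs_nonneg _) (by linarith)
      _ ≤ _ := abs_sub_le_norm_spiral_sub h
  wlog h₁ : 0 < t₁ generalizing t₁ t₂
  · rw [abs_sub_comm, norm_sub_rev]
    exact this t₂ t₁ (by rwa [mul_comm]) (pos_of_mul_neg_left (by rwa [mul_comm]) (not_lt.1 h₁))
  have h₂ : 0 < -t₂ := neg_pos.2 (neg_of_mul_neg_right h h₁.le)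
  have := mul_add_le_norm_spiral_add hε hε1 h₁ h₂
  rwa [spiral_neg, ← sub_eq_add_neg, ← sub_eq_add_neg,
    ← abs_of_pos (by linarith : 0 < t₁ - t₂)] at this
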